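/- Separable bilinear power allocation: for constants λ_ℓ > 0 and budgets P_S, P_D > 0, the infimum of ∑_{ℓ=1}^n 1/(λ_ℓ² ω_ℓ δ_ℓ) over ω_ℓ, δ_ℓ > 0 with ∑ ω_ℓ ≤ P_S and ∑ δ_ℓ ≤ P_D satisfies f(ω,δ) ≥ (∑_{ℓ=1}^n λ_ℓ^{−2/3})³ / (P_S P_D), with equality attained when ω_ℓ ∝ δ_ℓ ∝ λ_ℓ^{−2/3}. -/

import Mathlib

/-!
With `s ℓ = λ_ℓ^(-2/3)`, so that `1 / λ_ℓ² = s ℓ ^ 3`, and `S = ∑ s ℓ`, put `k = S² / (P_S P_D)`.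
The three numbers `s ℓ ^ 3 / (ω_ℓ δ_ℓ)`, `k S ω_ℓ / P_S`, `k S δ_ℓ / P_D` have product `(k s ℓ)³`,
so by AM–GM their sum is at least `3 k s ℓ`. Summing over `ℓ` and using the budgets gives
`f + 2 k S ≥ 3 k S`, i.e. `f ≥ k S = S³ / (P_S P_D)`. All three numbers coincide when
`ω ∝ δ ∝ s`, so the bound is attained there.
-/

open Finset Real

theorem three_mul_le_add_add_of_mul_mul_eq_pow_three {a b c m : ℝ} (ha : 0 ≤ a) (hb : 0 ≤ b)
    (hc : 0 ≤ c) (habc : a * b * c = m ^ 3) : 3 * m ≤ a + b + c := by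
  by_contra! h
  nlinarith [mul_nonneg ha hb, mul_nonneg (add_nonneg (add_nonneg ha hb) hc)
      (add_nonneg (add_nonneg (sq_nonneg (a - b)) (sq_nonneg (b - c))) (sq_nonneg (a - c))),
    pow_lt_pow_left₀ h (by positivity) three_ne_zero]

section Allocation

variable {ι : Type*} [Fintype ι]

theorem pow_three_sum_div_mul_le_sum_pow_three_div_mul {s w v : ι → ℝ} {P Q : ℝ}
    (hs : ∀ i, 0 ≤ s i) (hw : ∀ i, 0 < w i) (hv : ∀ i, 0 < v i) (hP : 0 < P) (hQ : 0 < Q)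
    (hwP : ∑ i, w i ≤ P) (hvQ : ∑ i, v i ≤ Q) :
    (∑ i, s i) ^ 3 / (P * Q) ≤ ∑ i, s i ^ 3 / (w i * v i) := by
  set S := ∑ i, s i
  set k := S ^ 2 / (P * Q)
  have hS : 0 ≤ S := sum_nonneg fun i _ => hs i
  have hkS : 0 ≤ k * S := by positivity
  have amgm : ∀ i, 3 * (k * s i) ≤ s i ^ 3 / (w i * v i) + k * S / P * w i + k * S / Q * v i := by
    intro i
    have := hs i; have := hw i; have := hv i
    refine three_mul_le_add_add_of_mul_mul_eq_pow_three (by positivity) (by positivity)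
      (by positivity) ?_
    simp only [k]
    field_simp
  have hsum := sum_le_sum fun i (_ : i ∈ univ) => amgm i
  simp only [sum_add_distrib, ← mul_sum] at hsum
  have hW : k * S / P * ∑ i, w i ≤ k * S := by
    rw [div_mul_eq_mul_div, div_le_iff₀ hP]; exact mul_le_mul_of_nonneg_left hwP hkS
  have hV : k * S / Q * ∑ i, v i ≤ k * S := by
    rw [div_mul_eq_mul_div, div_le_iff₀ hQ]; exact mul_le_mul_of_nonneg_left hvQ hkS
  calc S ^ 3 / (P * Q) = k * S := by ring
    _ ≤ ∑ i, s i ^ 3 / (w i * v i) := by linarith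

theorem sum_mul_div_sum_le {P : ℝ} (hP : 0 ≤ P) (s : ι → ℝ) :
    ∑ i, P * s i / ∑ j, s j ≤ P := by
  rw [← sum_div, ← mul_sum, mul_div_assoc]
  exact mul_le_of_le_one_right hP (div_self_le_one _)

theorem sum_pow_three_div_mul_proportional_eq {s : ι → ℝ} (hs : ∀ i, 0 < s i) (P Q : ℝ) :
    ∑ i, s i ^ 3 / ((P * s i / ∑ j, s j) * (Q * s i / ∑ j, s j)) = (∑ i, s i) ^ 3 / (P * Q) := by
  have hS : ∀ i, 0 < ∑ j, s j := fun i => sum_pos (fun j _ => hs j) ⟨i, mem_univ i⟩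
  calc ∑ i, s i ^ 3 / ((P * s i / ∑ j, s j) * (Q * s i / ∑ j, s j))
      = ∑ i, (∑ j, s j) ^ 2 / (P * Q) * s i := by
        refine sum_congr rfl fun i _ => ?_
        have := hs i; have := hS i
        field_simp
    _ = (∑ i, s i) ^ 3 / (P * Q) := by rw [← mul_sum]; ring

end Allocation

theorem rpow_neg_two_div_three_pow_three {x : ℝ} (hx : 0 ≤ x) :
    (x ^ (-(2 : ℝ) / 3)) ^ 3 = 1 / x ^ 2 := by
  rw [← rpow_natCast, ← rpow_mul hx, one_div, ← rpow_natCast x 2, ← rpow_neg hx]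
  norm_num

theorem stmt18_general (n : ℕ) (lam : Fin n → ℝ) (hlam : ∀ ℓ, 0 < lam ℓ)
    (PS PD : ℝ) (hPS : 0 < PS) (hPD : 0 < PD)
    (ω δ : Fin n → ℝ)
    (hω : ω = fun ℓ => PS * lam ℓ ^ (-(2 : ℝ) / 3) / ∑ k, lam k ^ (-(2 : ℝ) / 3))
    (hδ : δ = fun ℓ => PD * lam ℓ ^ (-(2 : ℝ) / 3) / ∑ k, lam k ^ (-(2 : ℝ) / 3)) :
    (∀ w v : Fin n → ℝ, (∀ ℓ, 0 < w ℓ) → (∀ ℓ, 0 < v ℓ) →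
        (∑ ℓ, w ℓ) ≤ PS → (∑ ℓ, v ℓ) ≤ PD →
        (∑ ℓ, lam ℓ ^ (-(2 : ℝ) / 3)) ^ 3 / (PS * PD) ≤
          ∑ ℓ, 1 / (lam ℓ ^ 2 * w ℓ * v ℓ)) ∧
      (∀ ℓ, 0 < ω ℓ) ∧ (∀ ℓ, 0 < δ ℓ) ∧ (∑ ℓ, ω ℓ) ≤ PS ∧ (∑ ℓ, δ ℓ) ≤ PD ∧
      ∑ ℓ, 1 / (lam ℓ ^ 2 * ω ℓ * δ ℓ) =
        (∑ ℓ, lam ℓ ^ (-(2 : ℝ) / 3)) ^ 3 / (PS * PD) := by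
  set s : Fin n → ℝ := fun ℓ => lam ℓ ^ (-(2 : ℝ) / 3)
  have hs : ∀ ℓ, 0 < s ℓ := fun ℓ => rpow_pos_of_pos (hlam ℓ) _
  have hS : ∀ ℓ, 0 < ∑ k, s k := fun ℓ => sum_pos (fun k _ => hs k) ⟨ℓ, mem_univ ℓ⟩
  have hobj : ∀ w v : Fin n → ℝ,
      ∑ ℓ, 1 / (lam ℓ ^ 2 * w ℓ * v ℓ) = ∑ ℓ, s ℓ ^ 3 / (w ℓ * v ℓ) := fun w v =>
    sum_congr rfl fun ℓ _ => by
      rw [rpow_neg_two_div_three_pow_three (hlam ℓ).le, div_div, mul_assoc]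
  subst hω hδ
  refine ⟨fun w v hw hv hwP hvQ => ?_, fun ℓ => ?_, fun ℓ => ?_,
    sum_mul_div_sum_le hPS.le s, sum_mul_div_sum_le hPD.le s, ?_⟩
  · rw [hobj]
    exact pow_three_sum_div_mul_le_sum_pow_three_div_mul (fun ℓ => (hs ℓ).le) hw hv hPS hPD hwP hvQ
  · exact div_pos (mul_pos hPS (hs ℓ)) (hS ℓ)
  · exact div_pos (mul_pos hPD (hs ℓ)) (hS ℓ)
  · rw [hobj]
    exact sum_pow_three_div_mul_proportional_eq hs PS PD

theorem stmt18 (n : ℕ) (hn : 1 ≤ n) (lam : Fin n → ℝ) (hlam : ∀ ℓ, 0 < lam ℓ)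
    (PS PD : ℝ) (hPS : 0 < PS) (hPD : 0 < PD)
    (ω δ : Fin n → ℝ)
    (hω : ω = fun ℓ => PS * lam ℓ ^ (-(2 : ℝ) / 3) / ∑ k, lam k ^ (-(2 : ℝ) / 3))
    (hδ : δ = fun ℓ => PD * lam ℓ ^ (-(2 : ℝ) / 3) / ∑ k, lam k ^ (-(2 : ℝ) / 3)) :
    (∀ w v : Fin n → ℝ, (∀ ℓ, 0 < w ℓ) → (∀ ℓ, 0 < v ℓ) →
        (∑ ℓ, w ℓ) ≤ PS → (∑ ℓ, v ℓ) ≤ PD →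
        (∑ ℓ, lam ℓ ^ (-(2 : ℝ) / 3)) ^ 3 / (PS * PD) ≤
          ∑ ℓ, 1 / (lam ℓ ^ 2 * w ℓ * v ℓ)) ∧
      (∀ ℓ, 0 < ω ℓ) ∧ (∀ ℓ, 0 < δ ℓ) ∧ (∑ ℓ, ω ℓ) ≤ PS ∧ (∑ ℓ, δ ℓ) ≤ PD ∧
      ∑ ℓ, 1 / (lam ℓ ^ 2 * ω ℓ * δ ℓ) =
        (∑ ℓ, lam ℓ ^ (-(2 : ℝ) / 3)) ^ 3 / (PS * PD) :=
  stmt18_general n lam hlam PS PD hPS hPD ω δ hω hδ
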